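/- Let P be a finite set of n points in ℝ^d, let C̃ = {c̃_1,...,c̃_k} ⊂ ℝ^d, let z be an integer with 1 ≤ z < n, and let P' ⊆ P with |P'| = n − z be the set of the n − z points of P closest to C̃ (i.e., with smallest values of min_j ‖p − c̃_j‖). Let ε > 0 and suppose r > 0 and N ∈ ℕ are such that exactly (1 + 1/ε)·z points of P lie outside the union of balls ⋃_j B(c̃_j, 2^N r). Then 2^N · r ≤ (ε/z) · Σ_{p ∈ P'} min_{1≤j≤k} ‖p − c̃_j‖. -/

import Mathlib

open Finset

/-- Distance from a point `p` to the nearest of the `k` centers `c`. -/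
noncomputable def minDist {d k : ℕ} [Nonempty (Fin k)]
    (c : Fin k → EuclideanSpace ℝ (Fin d)) (p : EuclideanSpace ℝ (Fin d)) : ℝ :=
  Finset.univ.inf' Finset.univ_nonempty (fun j => dist p (c j))

/-!
Let `S` be the set of points farther than `t = 2^N r` from every center. At most `z` points of
`P` are not inliers, so at least `#S - z = z / ε` points of `S` are inliers, each contributing at
least `t` to the inlier cost: `(z / ε) t ≤ ∑_{p ∈ P'} minDist c p`. This is Markov's inequality.
-/

lemma card_le_card_inter_add_card_sdiff_of_subset {α : Type*} [DecidableEq α]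
    {s t u : Finset α} (hst : s ⊆ t) : #s ≤ #(s ∩ u) + #(t \ u) := by
  rw [← card_inter_add_card_sdiff s u]
  gcongr

lemma card_mul_le_sum_of_subset {α : Type*} {s a : Finset α} {f : α → ℝ} {t : ℝ}
    (has : a ⊆ s) (hf : ∀ p ∈ s, 0 ≤ f p) (hfa : ∀ p ∈ a, t ≤ f p) :
    #a * t ≤ ∑ p ∈ s, f p :=
  calc #a * t = ∑ _p ∈ a, t := by rw [sum_const, nsmul_eq_mul]
    _ ≤ ∑ p ∈ a, f p := sum_le_sum hfa
    _ ≤ ∑ p ∈ s, f p := sum_le_sum_of_subset_of_nonneg has fun p hp _ => hf p hp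

section minDist

variable {d k : ℕ} [Nonempty (Fin k)] {c : Fin k → EuclideanSpace ℝ (Fin d)}
  {p : EuclideanSpace ℝ (Fin d)} {t : ℝ}

lemma le_minDist_iff : t ≤ minDist c p ↔ ∀ j, t ≤ dist p (c j) := by
  simp [minDist]

lemma minDist_nonneg : 0 ≤ minDist c p :=
  le_minDist_iff.2 fun _ => dist_nonneg

end minDist

theorem stmt0_general {d k : ℕ} [Nonempty (Fin k)]
    (P P' : Finset (EuclideanSpace ℝ (Fin d)))
    (c : Fin k → EuclideanSpace ℝ (Fin d))
    (n z N : ℕ) (ε r : ℝ)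
    (hn : P.card = n) (hz : 1 ≤ z)
    (hε : 0 < ε) (hr : 0 < r)
    (hsub : P' ⊆ P) (hcard : P'.card + z = n)
    (hout : (({p ∈ (P : Set (EuclideanSpace ℝ (Fin d))) |
        ∀ j, (2:ℝ)^N * r < dist p (c j)}).ncard : ℝ) = (1 + 1/ε) * z) :
    (2:ℝ)^N * r ≤ (ε / z) * ∑ p ∈ P', minDist c p := by
  classical
  set t : ℝ := 2 ^ N * r
  set S := {p ∈ P | ∀ j, t < dist p (c j)}
  have hSout : (#S : ℝ) = (1 + 1 / ε) * z := by
    rw [← hout, ← Set.ncard_coe_finset, coe_filter]; rfl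
  have houtliers : #(P \ P') = z := by rw [card_sdiff_of_subset hsub]; omega
  have hS : #S ≤ #(S ∩ P') + z :=
    houtliers ▸ card_le_card_inter_add_card_sdiff_of_subset (filter_subset _ P)
  have hinliers : (z : ℝ) / ε ≤ #(S ∩ P') := by
    have : (#S : ℝ) ≤ #(S ∩ P') + z := by exact_mod_cast hS
    rw [hSout] at this
    linarith [show (1 + 1 / ε) * z = z / ε + z by ring]
  have hcost : #(S ∩ P') * t ≤ ∑ p ∈ P', minDist c p :=
    card_mul_le_sum_of_subset inter_subset_right (fun _ _ => minDist_nonneg)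
      fun p hp => le_minDist_iff.2 fun j => ((mem_filter.1 (mem_inter.1 hp).1).2 j).le
  have hz' : (0 : ℝ) < z := by exact_mod_cast hz
  calc t = ε / z * (z / ε * t) := by field_simp
    _ ≤ ε / z * (#(S ∩ P') * t) := by gcongr
    _ ≤ ε / z * ∑ p ∈ P', minDist c p := by gcongr

theorem stmt0 {d k : ℕ} [Nonempty (Fin k)]
    (P P' : Finset (EuclideanSpace ℝ (Fin d)))
    (c : Fin k → EuclideanSpace ℝ (Fin d))
    (n z N : ℕ) (ε r : ℝ)
    (hn : P.card = n) (hz : 1 ≤ z) (hzn : z < n)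
    (hε : 0 < ε) (hr : 0 < r)
    (hsub : P' ⊆ P) (hcard : P'.card + z = n)
    (hclosest : ∀ p ∈ P', ∀ q ∈ P, q ∉ P' → minDist c p ≤ minDist c q)
    (hout : (({p ∈ (P : Set (EuclideanSpace ℝ (Fin d))) |
        ∀ j, (2:ℝ)^N * r < dist p (c j)}).ncard : ℝ) = (1 + 1/ε) * z) :
    (2:ℝ)^N * r ≤ (ε / z) * ∑ p ∈ P', minDist c p :=
  stmt0_general P P' c n z N ε r hn hz hε hr hsub hcard hout
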